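/- Let 𝕆ω be a field of omega-series in a log-atomic monomial T. Let g ∈ 𝕆ω with g ≠ 0 and log|g| ≼ log T, and let s ∈ ℝ be such that log|g| − s·log T ≺ log T (equivalently T^{s−ε} ≺ g ≺ T^{s+ε} for every real ε > 0). Then: if s ≠ 0, g' ∼ s·g/T, so g' ≍ g/T; and if s = 0, then g' ≺ g/T. Moreover, if g ≉ 1 then log|g'| − (s−1)·log T ≺ log T. -/

import Mathlib

/-!
Interface axiomatization of fields of transseries and omega-series, following
Berarducci–Mantova.  We do not construct Hahn fields; instead we record, as a
structure, the properties of the field of omega-series `𝕆ω` in a log-atomic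
monomial `T` (an ordered field containing `ℝ`, with `exp`/`log`, the class `J`
of purely infinite series, and the strongly `ℝ`-linear derivation `D`), and,
as a second structure, the composition `f ∘ x` of omega-series `f` with
elements `x > ℝ` of a confluent field of transseries `𝕌` (confluence is
precisely what guarantees the existence of such a composition, which we take
as primitive data).
-/

/-- Dominance: `a ≼ b` iff `|a| ≤ n * |b|` for some natural number `n`. -/
def domLE {K : Type*} [Field K] [LinearOrder K] [IsStrictOrderedRing K] (a b : K) : Prop :=
  ∃ n : ℕ, |a| ≤ (n : K) * |b|

/-- `a ≺ b` iff `a ≼ b` and `¬ b ≼ a` (equivalently `n * |a| < |b|` for all `n`). -/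
def domLT {K : Type*} [Field K] [LinearOrder K] [IsStrictOrderedRing K] (a b : K) : Prop :=
  domLE a b ∧ ¬ domLE b a

/-- `a ≍ b` iff `a ≼ b` and `b ≼ a`. -/
def domEq {K : Type*} [Field K] [LinearOrder K] [IsStrictOrderedRing K] (a b : K) : Prop :=
  domLE a b ∧ domLE b a

/-- Asymptotic equivalence: `a ∼ b` iff `a - b ≺ a`. -/
def domSim {K : Type*} [Field K] [LinearOrder K] [IsStrictOrderedRing K] (a b : K) : Prop :=
  domLT (a - b) a

/-- `x > ℝ`: `x` is larger than every real number (via the embedding `emb`). -/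
def gtReals {K : Type*} [Field K] [LinearOrder K] [IsStrictOrderedRing K] (emb : ℝ →+* K) (x : K) : Prop :=
  ∀ r : ℝ, emb r < x

/-- Interface for a field of omega-series `𝕆ω` in a log-atomic monomial `T`:
an ordered field containing `ℝ`, equipped with `exp` and `log`, the
distinguished log-atomic element `T > ℝ`, the additive group `J` of purely
infinite series, and the strongly `ℝ`-linear derivation `D` determined by
`D T = 1` and `D (exp γ) = exp γ * D γ`. -/
structure OmegaFieldStruct (O : Type*) [Field O] [LinearOrder O] [IsStrictOrderedRing O] where
  /-- the embedding of the real numbers (series with a single constant term) -/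
  emb : ℝ →+* O
  /-- the log-atomic monomial `T` -/
  T : O
  /-- the (total) exponential, inverse of `log` -/
  exp : O → O
  /-- the logarithm (meaningful on positive elements) -/
  log : O → O
  /-- the class of purely infinite series -/
  J : Set O
  /-- the derivation -/
  D : O → O
  T_gt_reals : gtReals emb T
  exp_add : ∀ a b : O, exp (a + b) = exp a * exp b
  exp_pos : ∀ a : O, 0 < exp a
  exp_strictMono : StrictMono exp
  log_exp : ∀ a : O, log (exp a) = a
  exp_log : ∀ a : O, 0 < a → exp (log a) = a
  exp_emb : ∀ r : ℝ, exp (emb r) = emb (Real.exp r)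
  /-- growth axiom: `(log 𝔪)^n < 𝔪`, extended to all positive infinite elements -/
  log_pow_lt : ∀ a : O, gtReals emb a → ∀ n : ℕ, (log a) ^ n < a
  J_zero : (0 : O) ∈ J
  J_add : ∀ a ∈ J, ∀ b ∈ J, a + b ∈ J
  J_neg : ∀ a ∈ J, -a ∈ J
  /-- purely infinite series are either zero or dominate `1` -/
  J_infinite : ∀ γ ∈ J, γ ≠ 0 → domLT 1 γ
  /-- `T` is log-atomic: its iterated logarithms are monomials `> 1`,
  hence purely infinite -/
  logIter_T_mem_J : ∀ n : ℕ, (log)^[n] T ∈ J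
  D_add : ∀ a b : O, D (a + b) = D a + D b
  D_mul : ∀ a b : O, D (a * b) = D a * b + a * D b
  D_T : D T = 1
  D_emb : ∀ r : ℝ, D (emb r) = 0
  D_exp : ∀ a : O, D (exp a) = exp a * D a
  /-- the H-field property: positive infinite elements have positive derivative -/
  D_pos_of_gt_reals : ∀ a : O, gtReals emb a → 0 < D a
  /-- the constants of the derivation are exactly the reals -/
  D_eq_zero_iff : ∀ a : O, D a = 0 ↔ ∃ r : ℝ, a = emb r

/-- Interface for the composition of omega-series by elements `x > ℝ` of a
confluent field of transseries `U`: for each such `x`, `f ↦ comp f x` is the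
unique strongly `ℝ`-linear ordered field embedding with `comp T x = x` and
`comp (exp γ) x = expU (comp γ x)`.  Confluence of `U` is what guarantees the
existence of this composition, which we take as primitive data. -/
structure CompStruct (O U : Type*) [Field O] [LinearOrder O] [IsStrictOrderedRing O] [Field U] [LinearOrder U] [IsStrictOrderedRing U]
    (Ω : OmegaFieldStruct O) where
  /-- the embedding of the real numbers into `U` -/
  embU : ℝ →+* U
  /-- the exponential of `U` -/
  expU : U → U
  /-- the logarithm of `U` (meaningful on positive elements) -/
  logU : U → U
  /-- the composition `f ∘ x` of an omega-series `f` with `x ∈ U`,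
  meaningful for `x > ℝ` -/
  comp : O → U → U
  expU_add : ∀ a b : U, expU (a + b) = expU a * expU b
  expU_pos : ∀ a : U, 0 < expU a
  expU_strictMono : StrictMono expU
  logU_expU : ∀ a : U, logU (expU a) = a
  expU_logU : ∀ a : U, 0 < a → expU (logU a) = a
  comp_add : ∀ (f g : O) (x : U), gtReals embU x →
    comp (f + g) x = comp f x + comp g x
  comp_mul : ∀ (f g : O) (x : U), gtReals embU x →
    comp (f * g) x = comp f x * comp g x
  comp_emb : ∀ (r : ℝ) (x : U), gtReals embU x → comp (Ω.emb r) x = embU r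
  comp_T : ∀ x : U, gtReals embU x → comp Ω.T x = x
  comp_exp : ∀ (f : O) (x : U), gtReals embU x →
    comp (Ω.exp f) x = expU (comp f x)
  comp_log : ∀ (f : O) (x : U), gtReals embU x → 0 < f →
    comp (Ω.log f) x = logU (comp f x)
  /-- right composition is an ordered field embedding -/
  comp_strictMono : ∀ x : U, gtReals embU x → StrictMono fun f : O => comp f x

/-!
Write `ℓ = log |g| = s · log T + δ` with `δ ≺ log T`. Since `𝕆ω` is an H-field, differentiation
preserves `≺` against a positive infinite element, so `δ' ≺ (log T)' = 1/T` and
`ℓ' = s/T + δ'`; as `g' = g · ℓ'`, the first two claims are valuation arithmetic in the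
archimedean classes of `𝕆ω`. For the last one, `log |g'| - (s - 1) log T = δ + log (T |ℓ'|)`.
When `g ≉ 1`, `|ℓ|` is infinite, and comparing it with the infinitesimal `T^(-ε)` shows
`T |ℓ'| > T^(-ε)` for every real `ε > 0`; since also `T |ℓ'| ≼ 1`, `log (T |ℓ'|) ≺ log T`.
-/

open ArchimedeanClass

section Dominance

variable {K : Type*} [Field K] [LinearOrder K] [IsStrictOrderedRing K] {a b : K}

theorem domLE_iff_mk_le : domLE a b ↔ mk b ≤ mk a := by
  simp only [domLE, mk_le_mk, nsmul_eq_mul]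

theorem domLT_iff_mk_lt : domLT a b ↔ mk b < mk a := by
  rw [domLT, domLE_iff_mk_le, domLE_iff_mk_le, not_le]
  exact ⟨And.right, fun h => ⟨h.le, h⟩⟩

theorem domLT_iff : domLT a b ↔ ∀ n : ℕ, (n : K) * |a| < |b| := by
  simp only [domLT_iff_mk_lt, mk_lt_mk, nsmul_eq_mul]

theorem domEq_iff_mk_eq : domEq a b ↔ mk a = mk b := by
  rw [domEq, domLE_iff_mk_le, domLE_iff_mk_le, and_comm, le_antisymm_iff]

theorem domSim_iff_mk_lt : domSim a b ↔ mk a < mk (a - b) :=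
  domLT_iff_mk_lt

theorem domLT_add {c : K} (ha : domLT a c) (hb : domLT b c) : domLT (a + b) c := by
  rw [domLT_iff_mk_lt] at *
  exact (lt_min ha hb).trans_le (min_le_mk_add a b)

end Dominance

section RealEmbedding

variable {K : Type*} [Field K] [LinearOrder K] [IsStrictOrderedRing K] (f : ℝ →+* K)

theorem Real.ringHom_monotone : Monotone f := by
  intro r t hrt
  have hsq : f t - f r = f √(t - r) ^ 2 := by
    rw [← map_sub, ← map_pow, Real.sq_sqrt (sub_nonneg.2 hrt)]
  exact sub_nonneg.1 (hsq ▸ sq_nonneg _)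

theorem Real.ringHom_strictMono : StrictMono f :=
  (Real.ringHom_monotone f).strictMono_of_injective f.injective

theorem Real.ringHom_pos {r : ℝ} (hr : 0 < r) : 0 < f r := by
  simpa using Real.ringHom_strictMono f hr

theorem mk_ringHom_real {r : ℝ} (hr : r ≠ 0) : mk (f r) = 0 :=
  mk_map_of_archimedean' ⟨f, Real.ringHom_monotone f⟩ hr

theorem mk_ringHom_real_nonneg (r : ℝ) : 0 ≤ mk (f r) :=
  mk_map_nonneg_of_archimedean ⟨f, Real.ringHom_monotone f⟩ r

variable {f} {x b : K}

theorem gtReals.pos (hx : gtReals f x) : 0 < x := by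
  simpa using hx 0

theorem gtReals.natCast_lt (hx : gtReals f x) (n : ℕ) : (n : K) < x := by
  simpa using hx n

theorem gtReals_abs_of_mk_neg (hx : mk x < 0) : gtReals f |x| := by
  rw [← mk_one] at hx
  intro r
  obtain ⟨n, hn⟩ := exists_nat_ge r
  have hnx : (n : K) < |x| := by simpa using mk_lt_mk.1 hx n
  calc f r ≤ f n := Real.ringHom_monotone f hn
    _ = n := map_natCast f n
    _ < |x| := hnx

theorem gtReals.ringHom_mul {ε : ℝ} (hε : 0 < ε) (hb : gtReals f b) : gtReals f (f ε * b) := by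
  intro r
  calc f r = f ε * f (r / ε) := by rw [← map_mul, mul_div_cancel₀ r hε.ne']
    _ < f ε * b := mul_lt_mul_of_pos_left (hb _) (Real.ringHom_pos f hε)

theorem domLT_of_neg_mul_lt_of_le (hb : gtReals f b)
    (hlow : ∀ ε : ℝ, 0 < ε → -(f ε * b) < x) {c : ℝ} (hup : x ≤ f c) : domLT x b := by
  rw [domLT_iff, abs_of_pos hb.pos]
  intro n
  rcases le_or_gt 0 x with hx | hx
  · calc (n : K) * |x| ≤ n * f c := by rw [abs_of_nonneg hx]; gcongr
      _ = f (n * c) := by rw [map_mul, map_natCast]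
      _ < b := hb _
  · have hinv : ((n : K) + 1) * f (1 / (n + 1)) = 1 := by
      rw [← map_natCast f, ← map_one f, ← map_add, ← map_mul,
        mul_one_div_cancel n.cast_add_one_pos.ne']
    have hlow' := mul_lt_mul_of_pos_left (hlow (1 / (n + 1)) (by positivity))
      (by positivity : (0 : K) < n + 1)
    rw [mul_neg, ← mul_assoc, hinv, one_mul] at hlow'
    rw [abs_of_neg hx]
    linarith

end RealEmbedding

namespace OmegaFieldStruct

variable {O : Type*} [Field O] [LinearOrder O] [IsStrictOrderedRing O] (Ω : OmegaFieldStruct O)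
  {a b : O}

theorem T_pos : 0 < Ω.T :=
  Ω.T_gt_reals.pos

theorem exp_zero : Ω.exp 0 = 1 := by
  simpa using Ω.exp_emb 0

theorem log_one : Ω.log 1 = 0 := by
  rw [← Ω.exp_zero, Ω.log_exp]

theorem log_mul (ha : 0 < a) (hb : 0 < b) : Ω.log (a * b) = Ω.log a + Ω.log b := by
  rw [← Ω.log_exp (Ω.log a + Ω.log b), Ω.exp_add, Ω.exp_log a ha, Ω.exp_log b hb]

theorem log_inv (ha : 0 < a) : Ω.log a⁻¹ = -Ω.log a := by
  have h := Ω.log_mul ha (inv_pos.2 ha)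
  rw [mul_inv_cancel₀ ha.ne', Ω.log_one] at h
  linear_combination -h

theorem log_lt_log (ha : 0 < a) (hab : a < b) : Ω.log a < Ω.log b := by
  rw [← Ω.exp_strictMono.lt_iff_lt, Ω.exp_log a ha, Ω.exp_log b (ha.trans hab)]
  exact hab

theorem log_emb {r : ℝ} (hr : 0 < r) : Ω.log (Ω.emb r) = Ω.emb (Real.log r) := by
  rw [← Real.exp_log hr, ← Ω.exp_emb, Ω.log_exp, Real.exp_log hr]

theorem gtReals_log (ha : gtReals Ω.emb a) : gtReals Ω.emb (Ω.log a) := by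
  intro r
  rw [← Ω.exp_strictMono.lt_iff_lt, Ω.exp_emb, Ω.exp_log a ha.pos]
  exact ha _

theorem gtReals_log_T : gtReals Ω.emb (Ω.log Ω.T) :=
  Ω.gtReals_log Ω.T_gt_reals

theorem gtReals_abs_log_of_mk_ne_zero (ha : 0 < a) (h : ArchimedeanClass.mk a ≠ 0) :
    gtReals Ω.emb |Ω.log a| := by
  rcases h.lt_or_gt with hneg | hpos
  · have hlog := Ω.gtReals_log (abs_of_pos ha ▸ gtReals_abs_of_mk_neg hneg)
    rwa [abs_of_pos hlog.pos]
  · have hinv : ArchimedeanClass.mk a⁻¹ < 0 := by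
      by_contra! hge
      have h1 : ArchimedeanClass.mk (a * a⁻¹) = 0 := by rw [mul_inv_cancel₀ ha.ne', mk_one]
      rw [mk_mul] at h1
      exact (hpos.trans_le (le_add_of_nonneg_right hge)).ne' h1
    have hlog := Ω.gtReals_log (abs_of_pos (inv_pos.2 ha) ▸ gtReals_abs_of_mk_neg hinv)
    rw [Ω.log_inv ha] at hlog
    rwa [abs_of_neg (neg_pos.1 hlog.pos)]

theorem D_zero : Ω.D 0 = 0 := by
  simpa using Ω.D_emb 0

theorem D_neg (a : O) : Ω.D (-a) = -Ω.D a := by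
  have h := Ω.D_add a (-a)
  rw [add_neg_cancel, Ω.D_zero] at h
  linear_combination -h

theorem D_emb_mul (r : ℝ) (a : O) : Ω.D (Ω.emb r * a) = Ω.emb r * Ω.D a := by
  rw [Ω.D_mul, Ω.D_emb, zero_mul, zero_add]

theorem D_natCast_mul (n : ℕ) (a : O) : Ω.D (n * a) = n * Ω.D a := by
  rw [← map_natCast Ω.emb n, D_emb_mul]

theorem mul_D_log (ha : 0 < a) : a * Ω.D (Ω.log a) = Ω.D a := by
  conv_rhs => rw [← Ω.exp_log a ha, Ω.D_exp, Ω.exp_log a ha]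

theorem D_log_T : Ω.D (Ω.log Ω.T) = Ω.T⁻¹ := by
  have h := Ω.mul_D_log Ω.T_pos
  rw [Ω.D_T] at h
  exact eq_inv_of_mul_eq_one_right h

theorem D_eq_mul_D_log_abs {g : O} (hg : g ≠ 0) : Ω.D g = g * Ω.D (Ω.log |g|) := by
  have h := Ω.mul_D_log (abs_pos.2 hg)
  rcases abs_cases g with ⟨hab, _⟩ | ⟨hab, _⟩ <;> rw [hab] at h ⊢
  · exact h.symm
  · rw [Ω.D_neg] at h
    linear_combination h

theorem D_abs (ha : gtReals Ω.emb |a|) : Ω.D |a| = |Ω.D a| := by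
  have hpos := Ω.D_pos_of_gt_reals _ ha
  rcases abs_cases a with ⟨hab, _⟩ | ⟨hab, _⟩ <;> rw [hab] at hpos ⊢
  · exact (abs_of_pos hpos).symm
  · rw [Ω.D_neg] at hpos ⊢
    exact (abs_of_neg (neg_pos.1 hpos)).symm

theorem natCast_mul_abs_D_lt_D {x y : O} (hxy : domLT x y) (hy : gtReals Ω.emb y) (n : ℕ) :
    n * |Ω.D x| < Ω.D y := by
  -- `y ± n x ≥ y - n |x| > y / 2` is still infinite, so both have positive derivative
  have hinf : ∀ z : O, |z| ≤ n * |x| → gtReals Ω.emb (y + z) := by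
    intro z hz r
    have h2n := domLT_iff.1 hxy (2 * n)
    have h2r := hy (2 * r)
    rw [abs_of_pos hy.pos] at h2n
    rw [map_mul, map_ofNat] at h2r
    push_cast at h2n
    linarith [neg_abs_le z]
  have hplus := Ω.D_pos_of_gt_reals _ (hinf (n * x) (by simp [abs_mul]))
  have hminus := Ω.D_pos_of_gt_reals _ (hinf (-(n * x)) (by simp [abs_mul]))
  rw [Ω.D_add, Ω.D_natCast_mul] at hplus
  rw [Ω.D_add, Ω.D_neg, Ω.D_natCast_mul] at hminus
  rcases abs_cases (Ω.D x) with ⟨h, _⟩ | ⟨h, _⟩ <;> rw [h] <;> linarith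

theorem mk_D_lt_mk_D {x y : O} (hy : gtReals Ω.emb y)
    (hxy : ArchimedeanClass.mk y < ArchimedeanClass.mk x) :
    ArchimedeanClass.mk (Ω.D y) < ArchimedeanClass.mk (Ω.D x) := by
  rw [← domLT_iff_mk_lt, domLT_iff, abs_of_pos (Ω.D_pos_of_gt_reals _ hy)]
  exact Ω.natCast_mul_abs_D_lt_D (domLT_iff_mk_lt.2 hxy) hy

theorem neg_emb_mul_log_T_lt_log_T_mul_D {m : O} (hm : gtReals Ω.emb m) {ε : ℝ} (hε : 0 < ε) :
    -(Ω.emb ε * Ω.log Ω.T) < Ω.log (Ω.T * Ω.D m) := by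
  -- compare `m` with the infinitesimal `x = T^(-ε/2)`, whose derivative is `-(ε/2) x / T`
  set c := Ω.emb (ε / 2) * Ω.log Ω.T
  have hc : gtReals Ω.emb c := Ω.gtReals_log_T.ringHom_mul (half_pos hε)
  set x := Ω.exp (-c)
  have hx : 0 < x := Ω.exp_pos _
  have hx1 : x < 1 := Ω.exp_zero ▸ Ω.exp_strictMono (neg_neg_of_pos hc.pos)
  have hxm : domLT x m := by
    refine domLT_iff.2 fun n => ?_
    rw [abs_of_pos hx, abs_of_pos hm.pos]
    calc (n : O) * x ≤ n := mul_le_of_le_one_right n.cast_nonneg hx1.le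
      _ < m := hm.natCast_lt n
  have hε2 : 0 < Ω.emb (ε / 2) := Real.ringHom_pos _ (half_pos hε)
  have hDx : |Ω.D x| = Ω.emb (ε / 2) * x * Ω.T⁻¹ := by
    rw [Ω.D_exp, Ω.D_neg, Ω.D_emb_mul, Ω.D_log_T, abs_mul, abs_neg, abs_mul,
      abs_of_pos hx, abs_of_pos hε2, abs_of_pos (inv_pos.2 Ω.T_pos)]
    ring
  have hlt : Ω.emb (ε / 2) * x < Ω.T * Ω.D m := by
    have h := Ω.natCast_mul_abs_D_lt_D hxm hm 1
    rw [Nat.cast_one, one_mul, hDx, mul_inv_lt_iff₀ Ω.T_pos] at h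
    rwa [mul_comm _ Ω.T] at h
  have hlog : Ω.log (Ω.emb (ε / 2) * x) = Ω.emb (Real.log (ε / 2)) - c := by
    rw [Ω.log_mul hε2 hx, Ω.log_emb (half_pos hε), Ω.log_exp, sub_eq_add_neg]
  calc -(Ω.emb ε * Ω.log Ω.T) = -c - c := by
        rw [← add_halves ε, map_add]; ring
    _ < Ω.emb (Real.log (ε / 2)) - c := by
        linarith [hc (-Real.log (ε / 2)), map_neg Ω.emb (Real.log (ε / 2))]
    _ = Ω.log (Ω.emb (ε / 2) * x) := hlog.symm
    _ < Ω.log (Ω.T * Ω.D m) := Ω.log_lt_log (mul_pos hε2 hx) hlt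

theorem domLT_log_T_mul_abs_D {ℓ : O} (hℓ : gtReals Ω.emb |ℓ|)
    (hDℓ : ArchimedeanClass.mk Ω.T⁻¹ ≤ ArchimedeanClass.mk (Ω.D ℓ)) :
    domLT (Ω.log (Ω.T * |Ω.D ℓ|)) (Ω.log Ω.T) := by
  have hD := Ω.D_abs hℓ
  obtain ⟨n, hn⟩ := mk_le_mk.1 hDℓ
  have hup : Ω.T * |Ω.D ℓ| < n + 1 := by
    rw [nsmul_eq_mul, abs_of_pos (inv_pos.2 Ω.T_pos)] at hn
    calc Ω.T * |Ω.D ℓ| ≤ Ω.T * (n * Ω.T⁻¹) := by gcongr; exact Ω.T_pos.le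
      _ = n := by field_simp [Ω.T_pos.ne']
      _ < n + 1 := lt_add_one _
  have hpos : 0 < Ω.T * |Ω.D ℓ| := hD ▸ mul_pos Ω.T_pos (Ω.D_pos_of_gt_reals _ hℓ)
  refine domLT_of_neg_mul_lt_of_le Ω.gtReals_log_T
    (fun ε hε => hD ▸ Ω.neg_emb_mul_log_T_lt_log_T_mul_D hℓ hε) (c := Real.log (n + 1)) ?_
  rw [← Ω.log_emb (by positivity), map_add, map_natCast, map_one]
  exact (Ω.log_lt_log hpos hup).le

theorem exists_D_log_abs_eq_add {g : O} {s : ℝ}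
    (hs : domLT (Ω.log |g| - Ω.emb s * Ω.log Ω.T) (Ω.log Ω.T)) :
    ∃ e, Ω.D (Ω.log |g|) = Ω.emb s * Ω.T⁻¹ + e ∧
      ArchimedeanClass.mk Ω.T⁻¹ < ArchimedeanClass.mk e := by
  refine ⟨Ω.D (Ω.log |g| - Ω.emb s * Ω.log Ω.T), ?_, ?_⟩
  · rw [← Ω.D_log_T, ← Ω.D_emb_mul, ← Ω.D_add, add_sub_cancel]
  · exact Ω.D_log_T ▸ Ω.mk_D_lt_mk_D Ω.gtReals_log_T (domLT_iff_mk_lt.1 hs)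

theorem domLT_log_abs_D_sub {g : O} (hg : g ≠ 0) (hg1 : ¬domEq g 1) {s : ℝ}
    (hs : domLT (Ω.log |g| - Ω.emb s * Ω.log Ω.T) (Ω.log Ω.T)) :
    domLT (Ω.log |Ω.D g| - Ω.emb (s - 1) * Ω.log Ω.T) (Ω.log Ω.T) := by
  set ℓ := Ω.log |g|
  obtain ⟨e, hDℓ, he⟩ := Ω.exists_D_log_abs_eq_add hs
  have hℓ : gtReals Ω.emb |ℓ| := Ω.gtReals_abs_log_of_mk_ne_zero (abs_pos.2 hg)
    fun h => hg1 (domEq_iff_mk_eq.2 ((mk_abs g).symm.trans h))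
  have hDℓ_pos : 0 < |Ω.D ℓ| := Ω.D_abs hℓ ▸ Ω.D_pos_of_gt_reals _ hℓ
  have hDℓ_le : ArchimedeanClass.mk Ω.T⁻¹ ≤ ArchimedeanClass.mk (Ω.D ℓ) := by
    have hsT : ArchimedeanClass.mk Ω.T⁻¹ ≤ ArchimedeanClass.mk (Ω.emb s * Ω.T⁻¹) := by
      rw [mk_mul]; exact le_add_of_nonneg_left (mk_ringHom_real_nonneg _ s)
    rw [hDℓ]
    exact (le_min hsT he.le).trans (min_le_mk_add _ _)
  have hsplit : Ω.log |Ω.D g| - Ω.emb (s - 1) * Ω.log Ω.T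
      = (ℓ - Ω.emb s * Ω.log Ω.T) + Ω.log (Ω.T * |Ω.D ℓ|) := by
    rw [Ω.D_eq_mul_D_log_abs hg, abs_mul, Ω.log_mul (abs_pos.2 hg) hDℓ_pos,
      Ω.log_mul Ω.T_pos hDℓ_pos, map_sub, map_one]
    ring
  rw [hsplit]
  exact domLT_add hs (Ω.domLT_log_T_mul_abs_D hℓ hDℓ_le)

end OmegaFieldStruct

theorem statement15_general {O : Type*} [Field O] [LinearOrder O] [IsStrictOrderedRing O]
    (Ω : OmegaFieldStruct O) (g : O) (hg : g ≠ 0) (s : ℝ)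
    (hs : domLT (Ω.log |g| - Ω.emb s * Ω.log Ω.T) (Ω.log Ω.T)) :
    (s ≠ 0 → domSim (Ω.D g) (Ω.emb s * g / Ω.T) ∧ domEq (Ω.D g) (g / Ω.T)) ∧
    (s = 0 → domLT (Ω.D g) (g / Ω.T)) ∧
    (¬ domEq g 1 →
      domLT (Ω.log |Ω.D g| - Ω.emb (s - 1) * Ω.log Ω.T) (Ω.log Ω.T)) := by
  obtain ⟨e, hDℓ, he⟩ := Ω.exists_D_log_abs_eq_add hs
  have hDg : Ω.D g = Ω.emb s * g / Ω.T + g * e := by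
    rw [Ω.D_eq_mul_D_log_abs hg, hDℓ]; ring
  have hge : mk (g / Ω.T) < mk (g * e) := by
    rw [div_eq_mul_inv, mk_mul, mk_mul]
    exact (add_lt_add_iff_right_of_ne_top (mk_eq_top_iff.not.2 hg)).2 he
  refine ⟨fun hs0 => ?_, fun hs0 => ?_, fun hg1 => Ω.domLT_log_abs_D_sub hg hg1 hs⟩
  · have hsg : mk (Ω.emb s * g / Ω.T) = mk (g / Ω.T) := by
      rw [mul_div_assoc, mk_mul, mk_ringHom_real _ hs0, zero_add]
    rw [domSim_iff_mk_lt, domEq_iff_mk_eq, hDg, add_sub_cancel_left,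
      mk_add_eq_mk_left (hsg ▸ hge), hsg]
    exact ⟨hge, rfl⟩
  · rw [domLT_iff_mk_lt, hDg, hs0, map_zero, zero_mul, zero_div, zero_add]
    exact hge

/-- Let `g ∈ 𝕆ω` with `g ≠ 0` and `log|g| ≼ log T`, and let `s ∈ ℝ` be such
that `log|g| − s·log T ≺ log T`.  Then: if `s ≠ 0`, `g' ∼ s·g/T`, so
`g' ≍ g/T`; if `s = 0`, then `g' ≺ g/T`.  Moreover, if `g ≉ 1` then
`log|g'| − (s−1)·log T ≺ log T`. -/
theorem statement15 {O : Type*} [Field O] [LinearOrder O] [IsStrictOrderedRing O]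
    (Ω : OmegaFieldStruct O) (g : O) (hg : g ≠ 0)
    (hle : domLE (Ω.log |g|) (Ω.log Ω.T)) (s : ℝ)
    (hs : domLT (Ω.log |g| - Ω.emb s * Ω.log Ω.T) (Ω.log Ω.T)) :
    (s ≠ 0 → domSim (Ω.D g) (Ω.emb s * g / Ω.T) ∧ domEq (Ω.D g) (g / Ω.T)) ∧
    (s = 0 → domLT (Ω.D g) (g / Ω.T)) ∧
    (¬ domEq g 1 →
      domLT (Ω.log |Ω.D g| - Ω.emb (s - 1) * Ω.log Ω.T) (Ω.log Ω.T)) :=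
  statement15_general Ω g hg s hs
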